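/- Let Q be an m×m real symmetric matrix such that the all-ones vector 𝟏 is an eigenvector of Q, let d ≤ m − 1, and let Λ = diag(λ₁, …, λ_d) with λ₁ ≥ λ₂ ≥ … ≥ λ_d ≥ 0. Then there exists S* ∈ ℝ^{d×m} with S* S*ᵀ = Λ and S* 𝟏 = 0, whose j-th row equals √λ_j times a unit eigenvector of Q, these eigenvectors being pairwise orthogonal and each orthogonal to 𝟏 and associated with the d largest eigenvalues of Q after removing one occurrence of the eigenvalue of 𝟏 (ordered nonincreasingly), such that for every S ∈ ℝ^{d×m} with S Sᵀ = Λ and S 𝟏 = 0 one has tr(S Q Sᵀ) ≤ tr(S* Q S*ᵀ). In other words, the maximum of tr(S Q Sᵀ) subject to S Sᵀ = Λ and S 𝟏 = 0 is attained by scaling by √Λ the d top eigenvectors of Q excluding the vector 𝟏. -/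

import Mathlib

/-!
Complete the eigenvectors `w` by the normalized `𝟏` to an orthonormal basis. A row `s` of an
admissible `S` is orthogonal to `𝟏`, so Parseval gives `s Q sᵀ = ∑ᵢ βᵢ ⟪wᵢ, s⟫²`. Writing
`⟪wᵢ, s_j⟫² = λ_j p_{ji}`, the matrix `p` has unit row sums (Parseval again, where `λ_j > 0`) and
column sums at most `1` (Bessel for the orthogonal rows of `S`). Abel summation over the antitone
`λ` then reduces `∑_j λ_j ∑ᵢ p_{ji} βᵢ ≤ ∑_j λ_j β_j` to Ky Fan's inequality
`∑ᵢ qᵢ βᵢ ≤ ∑_{i ≤ k} βᵢ` for weights `0 ≤ q ≤ 1` of total mass `k + 1`, where equality is attained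
by `S*`.
-/

open Matrix Finset

theorem mul_transpose_eq_one_of_orthonormal {ι n : Type*} [Fintype n] [DecidableEq ι]
    (v : ι → n → ℝ) (hv : ∀ i j, v i ⬝ᵥ v j = if i = j then 1 else 0) :
    of v * (of v)ᵀ = 1 := by
  ext i j
  exact hv i j

theorem dotProduct_eq_sum_of_orthonormal {ι n : Type*} [Fintype ι] [Fintype n] [DecidableEq ι]
    [DecidableEq n] (hcard : Fintype.card ι = Fintype.card n) (v : ι → n → ℝ)
    (hv : ∀ i j, v i ⬝ᵥ v j = if i = j then 1 else 0) (x y : n → ℝ) :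
    x ⬝ᵥ y = ∑ i, (v i ⬝ᵥ x) * (v i ⬝ᵥ y) := by
  have h : (of v)ᵀ * of v = 1 :=
    (mul_eq_one_comm_of_card_eq _ _ _ hcard).mp (mul_transpose_eq_one_of_orthonormal v hv)
  calc x ⬝ᵥ y = x ⬝ᵥ (((of v)ᵀ * of v) *ᵥ y) := by rw [h, one_mulVec]
    _ = (of v *ᵥ x) ⬝ᵥ (of v *ᵥ y) := by
      rw [← mulVec_mulVec, dotProduct_mulVec, vecMul_transpose]
    _ = ∑ i, (v i ⬝ᵥ x) * (v i ⬝ᵥ y) := rfl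

theorem dotProduct_eq_sum_of_dotProduct_eq_zero {ι n : Type*} [Fintype ι] [Fintype n]
    [DecidableEq ι] [DecidableEq n] (hcard : Fintype.card ι + 1 = Fintype.card n)
    (v : ι → n → ℝ) (hv : ∀ i j, v i ⬝ᵥ v j = if i = j then 1 else 0)
    (u : n → ℝ) (hu : u ≠ 0) (hvu : ∀ i, v i ⬝ᵥ u = 0)
    (x y : n → ℝ) (hx : x ⬝ᵥ u = 0) :
    x ⬝ᵥ y = ∑ i, (v i ⬝ᵥ x) * (v i ⬝ᵥ y) := by
  set e : n → ℝ := (√(u ⬝ᵥ u))⁻¹ • u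
  have huu : 0 < u ⬝ᵥ u := by simpa using dotProduct_self_star_pos_iff.mpr hu
  have hee : e ⬝ᵥ e = 1 := by
    simp only [e, smul_dotProduct, dotProduct_smul, smul_eq_mul, ← mul_assoc, ← mul_inv,
      Real.mul_self_sqrt huu.le, inv_mul_cancel₀ huu.ne']
  have hve : ∀ i, v i ⬝ᵥ e = 0 := fun i => by simp [e, hvu]
  have hxe : e ⬝ᵥ x = 0 := by simp [e, dotProduct_comm u, hx]
  have hv' : ∀ i j : Option ι, i.elim e v ⬝ᵥ j.elim e v = if i = j then 1 else 0 := by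
    rintro (_ | i) (_ | j) <;> simp [hee, hve, dotProduct_comm e, hv]
  rw [dotProduct_eq_sum_of_orthonormal (by simpa using hcard) _ hv' x y, Fintype.sum_option]
  simp [hxe]

theorem sum_sq_dotProduct_div_le {ι n : Type*} [Fintype ι] [Fintype n] (v : ι → n → ℝ)
    (hv : Pairwise fun i j => v i ⬝ᵥ v j = 0) (x : n → ℝ) :
    ∑ i, (x ⬝ᵥ v i) ^ 2 / (v i ⬝ᵥ v i) ≤ x ⬝ᵥ x := by
  -- a zero vector `v i` contributes `0`, through the junk value `_ / 0 = 0`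
  set a : ι → ℝ := fun i => (x ⬝ᵥ v i) / (v i ⬝ᵥ v i)
  set r : n → ℝ := x - ∑ i, a i • v i with hr
  have hrv : ∀ i, a i * (r ⬝ᵥ v i) = 0 := by
    intro i
    rw [hr, sub_dotProduct, sum_dotProduct, Finset.sum_eq_single i (fun j _ hji => by
      rw [smul_dotProduct, hv hji, smul_zero]) (by simp), smul_dotProduct, smul_eq_mul]
    rcases eq_or_ne (v i ⬝ᵥ v i) 0 with h | h
    · simp [a, h]
    · simp only [a]; field_simp; ring
  have hrr : r ⬝ᵥ r = x ⬝ᵥ x - ∑ i, (x ⬝ᵥ v i) ^ 2 / (v i ⬝ᵥ v i) :=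
    calc r ⬝ᵥ r = r ⬝ᵥ x - ∑ i, a i * (r ⬝ᵥ v i) := by
          conv_lhs => enter [2]; rw [hr]
          simp only [dotProduct_sub, dotProduct_sum, dotProduct_smul, smul_eq_mul]
      _ = x ⬝ᵥ x - ∑ i, (x ⬝ᵥ v i) ^ 2 / (v i ⬝ᵥ v i) := by
          rw [Finset.sum_eq_zero fun i _ => hrv i, sub_zero, hr, sub_dotProduct, sum_dotProduct]
          congr 1
          exact Finset.sum_congr rfl fun i _ => by
            rw [smul_dotProduct, smul_eq_mul, dotProduct_comm (v i)]; ring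
  have : 0 ≤ r ⬝ᵥ r := by simpa using dotProduct_star_self_nonneg r
  linarith

theorem sum_mul_nonpos_of_sum_Iic_nonpos {d : ℕ} (lam x : Fin d → ℝ) (hlam : Antitone lam)
    (hlam0 : ∀ j, 0 ≤ lam j) (hx : ∀ k, 0 < lam k → ∑ j ∈ Iic k, x j ≤ 0) :
    ∑ j, lam j * x j ≤ 0 := by
  induction d with
  | zero => simp
  | succ d ih =>
    have hsplit : ∑ j, lam j * x j = ∑ j : Fin d, (lam j.castSucc - lam (Fin.last d)) * x j.castSucc
        + lam (Fin.last d) * ∑ j ∈ Iic (Fin.last d), x j := by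
      rw [show Iic (Fin.last d) = univ from Iic_top, Fin.sum_univ_castSucc, Fin.sum_univ_castSucc,
        mul_add, Finset.mul_sum]
      simp only [sub_mul, Finset.sum_sub_distrib]
      ring
    have hlam' : Antitone fun j : Fin d => lam j.castSucc - lam (Fin.last d) := fun i j hij =>
      sub_le_sub_right (hlam (Fin.castSucc_le_castSucc_iff.mpr hij)) _
    rw [hsplit]
    refine add_nonpos (ih _ _ hlam' (fun j => sub_nonneg.mpr (hlam (Fin.le_last _)))
      fun k hk => ?_) ?_
    · rw [← Fin.sum_Iic_castSucc]
      exact hx _ (lt_of_le_of_lt (hlam0 _) (sub_pos.mp hk))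
    · rcases (hlam0 (Fin.last d)).eq_or_lt with h | h
      · rw [← h, zero_mul]
      · exact mul_nonpos_of_nonneg_of_nonpos h.le (hx _ h)

theorem sum_mul_le_sum_Iic_of_antitone {ι : Type*} [LinearOrder ι] [Fintype ι]
    [LocallyFiniteOrderBot ι] (β q : ι → ℝ) (hβ : Antitone β) (hq0 : ∀ i, 0 ≤ q i)
    (hq1 : ∀ i, q i ≤ 1) (a : ι) (hq : ∑ i, q i = #(Iic a)) :
    ∑ i, q i * β i ≤ ∑ i ∈ Iic a, β i := by
  set χ : ι → ℝ := fun i => if i ≤ a then 1 else 0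
  have hχ : ∀ f : ι → ℝ, ∑ i ∈ Iic a, f i = ∑ i, χ i * f i := by
    intro f
    simp [χ, Finset.sum_ite, Finset.filter_ge_eq_Iic]
  have hterm : ∀ i, (q i - χ i) * (β i - β a) ≤ 0 := by
    intro i
    rcases le_or_gt i a with h | h
    · simp only [χ, if_pos h]
      exact mul_nonpos_of_nonpos_of_nonneg (by linarith [hq1 i]) (sub_nonneg.mpr (hβ h))
    · simp only [χ, if_neg h.not_ge, sub_zero]
      exact mul_nonpos_of_nonneg_of_nonpos (hq0 i) (sub_nonpos.mpr (hβ h.le))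
  have hmass : ∑ i, q i = ∑ i, χ i := by simpa [hq] using hχ fun _ => 1
  have := Finset.sum_nonpos fun i (_ : i ∈ univ) => hterm i
  simp only [sub_mul, mul_sub, Finset.sum_sub_distrib, ← Finset.sum_mul, hmass, sub_self,
    sub_zero, sub_nonpos] at this
  rwa [hχ]

theorem sum_sum_mul_le_sum_mul_castLE {d n : ℕ} (hdn : d ≤ n) (lam : Fin d → ℝ) (β : Fin n → ℝ)
    (c : Fin d → Fin n → ℝ) (hlam : Antitone lam) (hlam0 : ∀ j, 0 ≤ lam j) (hβ : Antitone β)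
    (hc0 : ∀ j i, 0 ≤ c j i) (hrow : ∀ j, ∑ i, c j i = lam j)
    (hcol : ∀ i, ∑ j, c j i / lam j ≤ 1) :
    ∑ j, ∑ i, c j i * β i ≤ ∑ j, lam j * β (Fin.castLE hdn j) := by
  -- a row with `lam j = 0` vanishes, so `c = lam * p` survives the junk value `c j i / 0 = 0`
  set p : Fin d → Fin n → ℝ := fun j i => c j i / lam j
  have hc : ∀ j i, c j i = lam j * p j i := by
    intro j i
    rcases (hlam0 j).eq_or_lt with h | h
    · have hrow0 : ∑ i, c j i = 0 := (hrow j).trans h.symm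
      simp [← h, (Finset.sum_eq_zero_iff_of_nonneg fun i _ => hc0 j i).mp hrow0 i (mem_univ i)]
    · exact (mul_div_cancel₀ _ h.ne').symm
  have hp_row : ∀ j, 0 < lam j → ∑ i, p j i = 1 := fun j h => by
    simp only [p, ← Finset.sum_div, hrow, div_self h.ne']
  suffices ∑ j, lam j * (∑ i, p j i * β i - β (Fin.castLE hdn j)) ≤ 0 by
    simpa only [hc, mul_assoc, ← Finset.mul_sum, mul_sub, Finset.sum_sub_distrib, sub_nonpos]
      using this
  refine sum_mul_nonpos_of_sum_Iic_nonpos lam _ hlam hlam0 fun k hk => ?_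
  set q : Fin n → ℝ := fun i => ∑ j ∈ Iic k, p j i
  have hq : ∑ i, q i = #(Iic (Fin.castLE hdn k)) := by
    rw [Finset.sum_comm,
      Finset.sum_congr rfl fun j hj => hp_row j (hk.trans_le (hlam (mem_Iic.mp hj)))]
    simp [Fin.card_Iic]
  have hq1 : ∀ i, q i ≤ 1 := fun i =>
    (Finset.sum_le_sum_of_subset_of_nonneg (subset_univ _) fun j _ _ =>
      div_nonneg (hc0 j i) (hlam0 j)).trans (hcol i)
  have := sum_mul_le_sum_Iic_of_antitone β q hβ (fun i => Finset.sum_nonneg fun j _ =>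
    div_nonneg (hc0 j i) (hlam0 j)) hq1 _ hq
  rw [Fin.sum_Iic_castLE] at this
  rw [Finset.sum_sub_distrib, sub_nonpos, Finset.sum_comm]
  simpa only [q, Finset.sum_mul] using this

theorem trace_mul_mul_transpose {κ n R : Type*} [Fintype κ] [Fintype n] [CommSemiring R]
    (S : Matrix κ n R) (Q : Matrix n n R) :
    (S * Q * Sᵀ).trace = ∑ j, S j ⬝ᵥ (Q *ᵥ S j) :=
  Finset.sum_congr rfl fun j _ => by rw [dotProduct_mulVec]; rfl

theorem dotProduct_mulVec_self_eq_sum {ι n : Type*} [Fintype ι] [Fintype n] [DecidableEq ι]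
    [DecidableEq n] (hcard : Fintype.card ι + 1 = Fintype.card n) (Q : Matrix n n ℝ)
    (hQ : Q.IsSymm) (w : ι → n → ℝ) (β : ι → ℝ)
    (hw : ∀ i j, w i ⬝ᵥ w j = if i = j then 1 else 0) (hw_eig : ∀ i, Q *ᵥ w i = β i • w i)
    (u : n → ℝ) (hu : u ≠ 0) (hwu : ∀ i, w i ⬝ᵥ u = 0) (x : n → ℝ) (hx : x ⬝ᵥ u = 0) :
    x ⬝ᵥ (Q *ᵥ x) = ∑ i, (w i ⬝ᵥ x) ^ 2 * β i := by
  rw [dotProduct_eq_sum_of_dotProduct_eq_zero hcard w hw u hu hwu x _ hx]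
  refine Finset.sum_congr rfl fun i _ => ?_
  rw [dotProduct_mulVec, ← mulVec_transpose, hQ.eq, hw_eig, smul_dotProduct, smul_eq_mul]
  ring

theorem mul_transpose_eq_diagonal_of_orthonormal {κ n : Type*} [Fintype n] [DecidableEq κ]
    (v : κ → n → ℝ) (hv : ∀ i j, v i ⬝ᵥ v j = if i = j then 1 else 0) (lam : κ → ℝ)
    (hlam0 : ∀ j, 0 ≤ lam j) :
    (of fun j => √(lam j) • v j) * (of fun j => √(lam j) • v j)ᵀ = diagonal lam := by
  ext j k
  change (√(lam j) • v j) ⬝ᵥ (√(lam k) • v k) = _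
  rw [smul_dotProduct, dotProduct_smul, hv, diagonal_apply]
  split_ifs with h
  · subst h
    simp [Real.mul_self_sqrt (hlam0 j)]
  · simp

theorem trace_of_smul_mul_mul_transpose {κ n : Type*} [Fintype κ] [Fintype n]
    (Q : Matrix n n ℝ) (v : κ → n → ℝ) (γ : κ → ℝ) (hv : ∀ j, v j ⬝ᵥ v j = 1)
    (hv_eig : ∀ j, Q *ᵥ v j = γ j • v j) (lam : κ → ℝ) (hlam0 : ∀ j, 0 ≤ lam j) :
    ((of fun j => √(lam j) • v j) * Q * (of fun j => √(lam j) • v j)ᵀ).trace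
      = ∑ j, lam j * γ j := by
  rw [trace_mul_mul_transpose]
  refine Finset.sum_congr rfl fun j _ => ?_
  change (√(lam j) • v j) ⬝ᵥ (Q *ᵥ (√(lam j) • v j)) = _
  simp only [mulVec_smul, hv_eig, smul_dotProduct, dotProduct_smul, hv, smul_eq_mul, mul_one,
    ← mul_assoc]
  rw [mul_right_comm, Real.mul_self_sqrt (hlam0 j)]

theorem trace_mul_mul_transpose_le {d k : ℕ} {n : Type*} [Fintype n] [DecidableEq n]
    (hdk : d ≤ k) (hcard : k + 1 = Fintype.card n) (Q : Matrix n n ℝ) (hQ : Q.IsSymm)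
    (w : Fin k → n → ℝ) (β : Fin k → ℝ) (hw : ∀ i j, w i ⬝ᵥ w j = if i = j then 1 else 0)
    (hw_eig : ∀ i, Q *ᵥ w i = β i • w i) (hβ : Antitone β)
    (u : n → ℝ) (hu : u ≠ 0) (hwu : ∀ i, w i ⬝ᵥ u = 0)
    (lam : Fin d → ℝ) (hlam : Antitone lam) (hlam0 : ∀ j, 0 ≤ lam j)
    (S : Matrix (Fin d) n ℝ) (hSS : S * Sᵀ = diagonal lam) (hSu : S *ᵥ u = 0) :
    (S * Q * Sᵀ).trace ≤ ∑ j, lam j * β (Fin.castLE hdk j) := by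
  replace hcard : Fintype.card (Fin k) + 1 = Fintype.card n := by simpa using hcard
  have hrows : ∀ j k, S j ⬝ᵥ S k = diagonal lam j k := fun j k => congrFun₂ hSS j k
  have hrow : ∀ j, ∑ i, (w i ⬝ᵥ S j) ^ 2 = lam j := fun j => by
    simpa [sq, hrows] using (dotProduct_eq_sum_of_dotProduct_eq_zero hcard w hw u hu hwu
      (S j) (S j) (congrFun hSu j)).symm
  have hcol : ∀ i, ∑ j, (w i ⬝ᵥ S j) ^ 2 / lam j ≤ 1 := fun i => by
    simpa [hrows, hw] using sum_sq_dotProduct_div_le S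
      (fun j k hjk => show S j ⬝ᵥ S k = 0 by rw [hrows, diagonal_apply_ne _ hjk]) (w i)
  calc (S * Q * Sᵀ).trace = ∑ j, ∑ i, (w i ⬝ᵥ S j) ^ 2 * β i := by
        rw [trace_mul_mul_transpose]
        exact Finset.sum_congr rfl fun j _ =>
          dotProduct_mulVec_self_eq_sum hcard Q hQ w β hw hw_eig u hu hwu _ (congrFun hSu j)
    _ ≤ ∑ j, lam j * β (Fin.castLE hdk j) :=
        sum_sum_mul_le_sum_mul_castLE hdk lam β _ hlam hlam0 hβ (fun _ _ => sq_nonneg _) hrow hcol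

/-- The maximum of `tr(S Q Sᵀ)` subject to `S Sᵀ = Λ` and `S 𝟏 = 0`
is attained by scaling by `√Λ` the `d` top eigenvectors of `Q` excluding the
eigenvector `𝟏`. The eigenvalues of the symmetric matrix `Q` after removing one
occurrence of the eigenvalue of `𝟏` are described by an orthonormal family `w` of
eigenvectors orthogonal to `𝟏`, with eigenvalues `β` ordered nonincreasingly. -/
theorem max_trace_SQSt_excluding_ones (m d : ℕ) (hd : d + 1 ≤ m)
    (Q : Matrix (Fin m) (Fin m) ℝ) (hQ : Q.IsSymm)
    (w : Fin (m - 1) → (Fin m → ℝ)) (β : Fin (m - 1) → ℝ)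
    (hw_orth : ∀ i j : Fin (m - 1), w i ⬝ᵥ w j = if i = j then (1 : ℝ) else 0)
    (hw_one : ∀ i, w i ⬝ᵥ (fun _ => (1 : ℝ)) = 0)
    (hw_eig : ∀ i, Q *ᵥ w i = β i • w i)
    (hβ_anti : ∀ i j : Fin (m - 1), i ≤ j → β j ≤ β i)
    (lam : Fin d → ℝ)
    (hlam_anti : ∀ i j : Fin d, i ≤ j → lam j ≤ lam i)
    (hlam_nonneg : ∀ j : Fin d, 0 ≤ lam j) :
    ∃ Sstar : Matrix (Fin d) (Fin m) ℝ,
      (∀ (j : Fin d) (i : Fin m),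
        Sstar j i = Real.sqrt (lam j) * w (Fin.castLE (by omega) j) i) ∧
      Sstar * Sstarᵀ = Matrix.diagonal lam ∧
      Sstar *ᵥ (fun _ => (1 : ℝ)) = 0 ∧
      ∀ S : Matrix (Fin d) (Fin m) ℝ, S * Sᵀ = Matrix.diagonal lam →
        S *ᵥ (fun _ => (1 : ℝ)) = 0 →
        (S * Q * Sᵀ).trace ≤ (Sstar * Q * Sstarᵀ).trace := by
  have hdm : d ≤ m - 1 := by omega
  have hone : (fun _ : Fin m => (1 : ℝ)) ≠ 0 := fun h => one_ne_zero (congrFun h ⟨0, by omega⟩)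
  have hv : ∀ j k : Fin d,
      w (Fin.castLE hdm j) ⬝ᵥ w (Fin.castLE hdm k) = if j = k then 1 else 0 := by
    simp [hw_orth, (Fin.castLE_injective hdm).eq_iff]
  refine ⟨of fun j => √(lam j) • w (Fin.castLE hdm j), fun _ _ => rfl,
    mul_transpose_eq_diagonal_of_orthonormal _ hv lam hlam_nonneg, ?_, fun S hSS hS1 => ?_⟩
  · funext j
    simp only [mulVec, of_apply, smul_dotProduct, hw_one, smul_zero, Pi.zero_apply]
  · rw [trace_of_smul_mul_mul_transpose Q _ _ (fun j => by simpa using hv j j)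
      (fun j => hw_eig _) lam hlam_nonneg]
    exact trace_mul_mul_transpose_le hdm (by rw [Fintype.card_fin]; omega) Q hQ w β hw_orth
      hw_eig hβ_anti _ hone hw_one lam hlam_anti hlam_nonneg S hSS hS1
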